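/- arXiv:2212.12433 — 2 statements merged into one kernel-verified Lean document; each statement's English description precedes it below -/
import Mathlib

section
/- Let S be a gr-C-2^A-secondary submodule of M. Then Gr(Ann_Γ(S)) is a gr-2^A ideal of Γ, i.e., for all homogeneous a, b, c ∈ Γ with abc ∈ Gr(Ann_Γ(S)), either ab ∈ Gr(Ann_Γ(S)), or ac ∈ Gr(Ann_Γ(S)), or bc ∈ Gr(Ann_Γ(S)) (and Gr(Ann_Γ(S)) is a proper ideal). -/
open Pointwise DirectSum

section Preliminaries

variable {G : Type*} [AddGroup G] [DecidableEq G]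
variable {Γ : Type*} [CommRing Γ]
variable {M : Type*} [AddCommGroup M] [Module Γ M]

/-- `x` lies in the graded radical `Gr I`: for homogeneous `x` this is the defining
condition that some positive power of `x` lies in `I`. -/
def grMem (I : Ideal Γ) (x : Γ) : Prop := ∃ n : ℕ, 0 < n ∧ x ^ n ∈ I

variable (𝒜 : G → AddSubgroup Γ) (ℳ : G → AddSubgroup M)
variable [GradedRing 𝒜] [DirectSum.Decomposition ℳ] [SetLike.GradedSMul 𝒜 ℳ]

/-- A graded submodule: closed under taking homogeneous components. -/
def IsGradedSubmodule (S : Submodule Γ M) : Prop :=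
  ∀ (g : G) ⦃x : M⦄, x ∈ S → (DirectSum.decompose ℳ x g : M) ∈ S

/-- A graded ideal: closed under taking homogeneous components. -/
def IsGradedIdeal (I : Ideal Γ) : Prop :=
  ∀ (g : G) ⦃x : Γ⦄, x ∈ I → (DirectSum.decompose 𝒜 x g : Γ) ∈ I

/-- A graded classical 2-absorbing secondary (gr-C-2^A-secondary) submodule:
a nonzero graded submodule `S` such that whenever `r, s` are homogeneous and `L` is a
graded submodule with `r*s • S ⊆ L`, either `r • S ⊆ L`, or `s • S ⊆ L`, or
`r*s ∈ Gr(Ann S)`. -/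
def IsGrC2ASecondary (S : Submodule Γ M) : Prop :=
  S ≠ ⊥ ∧ IsGradedSubmodule ℳ S ∧
    ∀ r s : Γ, SetLike.IsHomogeneousElem 𝒜 r → SetLike.IsHomogeneousElem 𝒜 s →
      ∀ L : Submodule Γ M, IsGradedSubmodule ℳ L →
        (r * s) • S ≤ L →
          r • S ≤ L ∨ s • S ≤ L ∨ grMem S.annihilator (r * s)

end Preliminaries

variable {G : Type*} [AddGroup G] [DecidableEq G]
variable {Γ : Type*} [CommRing Γ]
variable {M : Type*} [AddCommGroup M] [Module Γ M]
variable (𝒜 : G → AddSubgroup Γ) (ℳ : G → AddSubgroup M)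
variable [GradedRing 𝒜] [DirectSum.Decomposition ℳ] [SetLike.GradedSMul 𝒜 ℳ]


omit [GradedRing 𝒜] in
theorem coe_decompose_smul_add_of_left_mem {c : Γ} {i : G} (hc : c ∈ 𝒜 i) (x : M) (g : G) :
    (decompose ℳ (c • x) (i + g) : M) = c • (decompose ℳ x g : M) := by
  induction x using DirectSum.Decomposition.inductionOn ℳ with
  | zero => simp
  | @homogeneous h m =>
    obtain ⟨m, hm⟩ := m
    have hcm : c • m ∈ ℳ (i + h) := SetLike.GradedSMul.smul_mem hc hm
    by_cases hgh : h = g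
    · subst hgh
      rw [decompose_of_mem_same ℳ hm, decompose_of_mem_same ℳ hcm]
    · rw [decompose_of_mem_ne ℳ hm hgh, decompose_of_mem_ne ℳ hcm (by simpa using hgh), smul_zero]
  | add x y hx hy =>
    simp only [smul_add, decompose_add, DirectSum.add_apply, AddSubgroup.coe_add, hx, hy]

omit [GradedRing 𝒜] in
theorem isGradedSubmodule_ker_lsmul_of_mem {c : Γ} {i : G} (hc : c ∈ 𝒜 i) :
    IsGradedSubmodule ℳ (LinearMap.ker (LinearMap.lsmul Γ M c)) := by
  intro g x (hx : c • x = 0)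
  change c • (decompose ℳ x g : M) = 0
  rw [← coe_decompose_smul_add_of_left_mem 𝒜 ℳ hc, hx, decompose_zero]
  rfl

omit [DecidableEq G] in
theorem grMem_iff_mem_radical {I : Ideal Γ} {x : Γ} : grMem I x ↔ x ∈ I.radical :=
  ⟨fun ⟨n, _, hn⟩ => ⟨n, hn⟩, fun ⟨n, hn⟩ =>
    ⟨n + 1, n.succ_pos, by rw [pow_succ]; exact I.mul_mem_right x hn⟩⟩

omit [DecidableEq G] in
theorem Submodule.pointwise_smul_le_ker_lsmul_iff {r c : Γ} {S : Submodule Γ M} :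
    r • S ≤ LinearMap.ker (LinearMap.lsmul Γ M c) ↔ r * c ∈ S.annihilator := by
  rw [Submodule.pointwise_smul_def, Submodule.map_le_iff_le_comap, Submodule.mem_annihilator]
  simp [SetLike.le_def, mul_smul, smul_comm r c]

/-- If `S` is a gr-C-2^A-secondary submodule of `M`, then `Gr(Ann S)` is a
gr-2^A (graded 2-absorbing) ideal of `Γ`: it is proper (the homogeneous element `1`
does not lie in it) and for all homogeneous `a, b, c` with `a*b*c ∈ Gr(Ann S)`,
either `a*b ∈ Gr(Ann S)`, or `a*c ∈ Gr(Ann S)`, or `b*c ∈ Gr(Ann S)`. -/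
theorem stmt3 (S : Submodule Γ M) (hS : IsGrC2ASecondary 𝒜 ℳ S) :
    ¬ grMem S.annihilator 1 ∧
      ∀ a b c : Γ, SetLike.IsHomogeneousElem 𝒜 a → SetLike.IsHomogeneousElem 𝒜 b →
        SetLike.IsHomogeneousElem 𝒜 c → grMem S.annihilator (a * b * c) →
          grMem S.annihilator (a * b) ∨ grMem S.annihilator (a * c) ∨
            grMem S.annihilator (b * c) := by
  obtain ⟨hS_ne_bot, -, hS_absorb⟩ := hS
  simp only [grMem_iff_mem_radical] at hS_absorb ⊢
  refine ⟨fun h1 => hS_ne_bot ?_, ?_⟩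
  · rwa [← Ideal.eq_top_iff_one, Ideal.radical_eq_top, Submodule.annihilator_eq_top_iff] at h1
  rintro a b c ⟨_, ha⟩ ⟨_, hb⟩ ⟨_, hc⟩ ⟨n, habc⟩
  have hle : (a ^ n * b ^ n) • S ≤ LinearMap.ker (LinearMap.lsmul Γ M (c ^ n)) := by
    rwa [Submodule.pointwise_smul_le_ker_lsmul_iff, ← mul_pow, ← mul_pow]
  rcases hS_absorb _ _ ⟨_, SetLike.pow_mem_graded n ha⟩ ⟨_, SetLike.pow_mem_graded n hb⟩ _
      (isGradedSubmodule_ker_lsmul_of_mem 𝒜 ℳ (SetLike.pow_mem_graded n hc)) hle with h | h | h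
  · rw [Submodule.pointwise_smul_le_ker_lsmul_iff, ← mul_pow] at h
    exact .inr (.inl ⟨n, h⟩)
  · rw [Submodule.pointwise_smul_le_ker_lsmul_iff, ← mul_pow] at h
    exact .inr (.inr ⟨n, h⟩)
  · rw [← mul_pow] at h
    exact .inl (Ideal.mem_radical_of_pow_mem h)
end

section
/- Let M and M' be G-graded Γ-modules and let ψ : M → M' be a graded Γ-monomorphism, i.e., an injective Γ-linear map with ψ(M_g) ⊆ M'_g for all g ∈ G. If S is a gr-C-2^A-secondary submodule of M, then ψ(S) is a gr-C-2^A-secondary submodule of M'. -/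
open Pointwise DirectSum

variable {G : Type*} [AddGroup G] [DecidableEq G]
variable {Γ : Type*} [CommRing Γ]
variable {M : Type*} [AddCommGroup M] [Module Γ M]
variable {M' : Type*} [AddCommGroup M'] [Module Γ M']
variable (𝒜 : G → AddSubgroup Γ) (ℳ : G → AddSubgroup M) (ℳ' : G → AddSubgroup M')
variable [GradedRing 𝒜] [DirectSum.Decomposition ℳ] [SetLike.GradedSMul 𝒜 ℳ]
variable [DirectSum.Decomposition ℳ'] [SetLike.GradedSMul 𝒜 ℳ']

/-! A graded map commutes with taking homogeneous components, so graded submodules of `M'` pull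
back along `ψ` to graded submodules of `M`. Testing `ψ(S)` against a graded `L ≤ M'` is then
testing `S` against `ψ⁻¹(L)`, since `r • ψ(S) ≤ L ↔ r • S ≤ ψ⁻¹(L)`, and `Ann S ≤ Ann ψ(S)`. -/

lemma DirectSum.decompose_map_apply {ι N N' σ σ' F : Type*} [DecidableEq ι]
    [AddCommMonoid N] [AddCommMonoid N'] [SetLike σ N] [AddSubmonoidClass σ N]
    [SetLike σ' N'] [AddSubmonoidClass σ' N'] {ℳ : ι → σ} {ℳ' : ι → σ'}
    [Decomposition ℳ] [Decomposition ℳ'] [FunLike F N N'] [AddMonoidHomClass F N N'] {ψ : F}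
    (hgr : ∀ (g : ι) (x : N), x ∈ ℳ g → ψ x ∈ ℳ' g) (x : N) (g : ι) :
    (decompose ℳ' (ψ x) g : N') = ψ (decompose ℳ x g : N) := by
  induction x using DirectSum.Decomposition.inductionOn ℳ with
  | zero => simp
  | @homogeneous i m =>
    by_cases h : i = g
    · subst h
      rw [decompose_of_mem_same ℳ m.2, decompose_of_mem_same ℳ' (hgr i m m.2)]
    · rw [decompose_of_mem_ne ℳ m.2 h, decompose_of_mem_ne ℳ' (hgr i m m.2) h, map_zero]
  | add a b ha hb =>
    simp only [map_add, decompose_add, DirectSum.add_apply, AddMemClass.coe_add, ha, hb]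

section GradedMap

variable {ι R N N' : Type*} [DecidableEq ι] [CommRing R]
  [AddCommGroup N] [Module R N] [AddCommGroup N'] [Module R N']
  {𝒩 : ι → AddSubgroup N} {𝒩' : ι → AddSubgroup N'} [Decomposition 𝒩] [Decomposition 𝒩']
  {ψ : N →ₗ[R] N'}

lemma IsGradedSubmodule.map (hgr : ∀ (g : ι) (x : N), x ∈ 𝒩 g → ψ x ∈ 𝒩' g)
    {S : Submodule R N} (hS : IsGradedSubmodule 𝒩 S) :
    IsGradedSubmodule 𝒩' (S.map ψ) := by
  rintro g _ ⟨x, hx, rfl⟩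
  rw [decompose_map_apply hgr]
  exact ⟨_, hS g hx, rfl⟩

lemma IsGradedSubmodule.comap (hgr : ∀ (g : ι) (x : N), x ∈ 𝒩 g → ψ x ∈ 𝒩' g)
    {L : Submodule R N'} (hL : IsGradedSubmodule 𝒩' L) :
    IsGradedSubmodule 𝒩 (L.comap ψ) := by
  intro g x hx
  rw [Submodule.mem_comap, ← decompose_map_apply hgr]
  exact hL g hx

end GradedMap

lemma Submodule.annihilator_le_annihilator_map (S : Submodule Γ M) (ψ : M →ₗ[Γ] M') :
    S.annihilator ≤ (S.map ψ).annihilator := by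
  intro r hr
  rw [Submodule.mem_annihilator] at hr ⊢
  rintro _ ⟨m, hm, rfl⟩
  rw [← map_smul, hr m hm, map_zero]

lemma grMem_mono {I J : Ideal Γ} (hIJ : I ≤ J) {x : Γ} : grMem I x → grMem J x :=
  fun ⟨n, hn, hx⟩ => ⟨n, hn, hIJ hx⟩

/-- If `ψ : M → M'` is a graded monomorphism and `S` is a gr-C-2^A-secondary submodule
of `M`, then `ψ(S)` is a gr-C-2^A-secondary submodule of `M'`. -/
theorem stmt11 (ψ : M →ₗ[Γ] M') (hinj : Function.Injective ψ)
    (hgr : ∀ (g : G) (x : M), x ∈ ℳ g → ψ x ∈ ℳ' g)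
    (S : Submodule Γ M) (hS : IsGrC2ASecondary 𝒜 ℳ S) :
    IsGrC2ASecondary 𝒜 ℳ' (S.map ψ) := by
  obtain ⟨hne, hSgr, hS⟩ := hS
  refine ⟨fun h => hne <| Submodule.map_injective_of_injective hinj <|
      h.trans (Submodule.map_bot ψ).symm,
    hSgr.map hgr, fun r s hr hs L hL hle => ?_⟩
  simp only [← Submodule.map_pointwise_smul, Submodule.map_le_iff_le_comap] at hle ⊢
  exact (hS r s hr hs _ (hL.comap hgr) hle).imp_right
    (Or.imp_right (grMem_mono (S.annihilator_le_annihilator_map ψ)))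
end
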